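/- (Positive semi-definiteness of the interaction quadratic form) Let $u \in C^1(\mathbb{R}^4, \mathbb{C})$ and define for $x, y \in \mathbb{R}^4$ the matrix $\Phi_{jk}(x,y) = |u(y)|^2 \mathrm{Re}(\bar u_k u_j)(x) - \mathrm{Im}(\bar u u_j)(y)\,\mathrm{Im}(\bar u u_k)(x)$ and its symmetrization $\Psi_{jk}(x,y) = \tfrac12 \Phi_{jk}(x,y) + \tfrac12 \Phi_{jk}(y,x)$. Then for every $e \in \mathbb{R}^4$, $\sum_{j,k} e_j e_k \Psi_{jk}(x,y) \geq 0$. -/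

import Mathlib

/-!
The quadratic form `∑ e_j e_k Φ_{jk}(x,y)` equals `|u(y)|² |e·∇u(x)|² - Im(ū e·∇u)(y) Im(ū e·∇u)(x)`.
After symmetrizing in `x, y`, the bound `|Im(ū e·∇u)| ≤ |u| |e·∇u|` and AM–GM show that the
cross term is dominated by the mean of the two square terms.
-/

open MeasureTheory Real
noncomputable section

abbrev E4 := EuclideanSpace ℝ (Fin 4)

def pdC (f : E4 → ℂ) (k : Fin 4) (x : E4) : ℂ := fderiv ℝ f x (EuclideanSpace.single k 1)

def Phi (u : E4 → ℂ) (j k : Fin 4) (x y : E4) : ℝ :=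
  ‖u y‖ ^ 2 * ((starRingEnd ℂ) (pdC u k x) * pdC u j x).re
    - ((starRingEnd ℂ) (u y) * pdC u j y).im * ((starRingEnd ℂ) (u x) * pdC u k x).im

open ComplexConjugate

namespace Complex

theorem abs_im_conj_mul_le (a b : ℂ) : |(conj a * b).im| ≤ ‖a‖ * ‖b‖ :=
  (abs_im_le_norm _).trans_eq (by rw [norm_mul, RCLike.norm_conj])

theorem im_conj_mul_mul_im_conj_mul_le (a b v w : ℂ) :
    (conj a * w).im * (conj b * v).im ≤ (‖a‖ ^ 2 * ‖v‖ ^ 2 + ‖b‖ ^ 2 * ‖w‖ ^ 2) / 2 := by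
  have hprod : (conj a * w).im * (conj b * v).im ≤ (‖a‖ * ‖w‖) * (‖b‖ * ‖v‖) :=
    calc _ ≤ |(conj a * w).im * (conj b * v).im| := le_abs_self _
      _ = |(conj a * w).im| * |(conj b * v).im| := abs_mul _ _
      _ ≤ _ := mul_le_mul (abs_im_conj_mul_le a w) (abs_im_conj_mul_le b v) (abs_nonneg _)
          (by positivity)
  nlinarith [sq_nonneg (‖a‖ * ‖v‖ - ‖b‖ * ‖w‖)]

variable {ι : Type*} [Fintype ι]

theorem sum_sum_mul_re_conj_mul (e : ι → ℝ) (p : ι → ℂ) :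
    ∑ j, ∑ k, e j * e k * (conj (p k) * p j).re = ‖∑ j, (e j : ℂ) * p j‖ ^ 2 := by
  rw [← normSq_eq_norm_sq, ← ofReal_re (normSq _), ← mul_conj, map_sum, Finset.sum_mul_sum,
    re_sum]
  refine Finset.sum_congr rfl fun j _ => ?_
  rw [re_sum]
  refine Finset.sum_congr rfl fun k _ => ?_
  rw [map_mul, conj_ofReal, mul_mul_mul_comm, mul_comm (p j), ← ofReal_mul, re_ofReal_mul]

theorem im_conj_mul_sum (a : ℂ) (e : ι → ℝ) (p : ι → ℂ) :
    (conj a * ∑ j, (e j : ℂ) * p j).im = ∑ j, e j * (conj a * p j).im := by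
  simp only [Finset.mul_sum, im_sum, mul_left_comm (conj a), im_ofReal_mul]

end Complex

open Complex

theorem sum_sum_mul_Phi (u : E4 → ℂ) (e : Fin 4 → ℝ) (x y : E4) :
    ∑ j, ∑ k, e j * e k * Phi u j k x y =
      ‖u y‖ ^ 2 * ‖∑ j, (e j : ℂ) * pdC u j x‖ ^ 2 -
        (conj (u y) * ∑ j, (e j : ℂ) * pdC u j y).im *
          (conj (u x) * ∑ k, (e k : ℂ) * pdC u k x).im := by
  rw [← sum_sum_mul_re_conj_mul, im_conj_mul_sum, im_conj_mul_sum, Finset.sum_mul_sum,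
    Finset.mul_sum, ← Finset.sum_sub_distrib]
  refine Finset.sum_congr rfl fun j _ => ?_
  rw [Finset.mul_sum, ← Finset.sum_sub_distrib]
  refine Finset.sum_congr rfl fun k _ => ?_
  rw [Phi]
  ring

theorem stmt8_general (u : E4 → ℂ) (x y : E4) (e : Fin 4 → ℝ) :
    0 ≤ ∑ j, ∑ k, e j * e k * ((1/2) * Phi u j k x y + (1/2) * Phi u j k y x) := by
  have hsplit : ∑ j, ∑ k, e j * e k * ((1/2) * Phi u j k x y + (1/2) * Phi u j k y x) =
      (∑ j, ∑ k, e j * e k * Phi u j k x y + ∑ j, ∑ k, e j * e k * Phi u j k y x) / 2 := by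
    simp only [mul_add, Finset.sum_add_distrib, Finset.sum_div, add_div]
    congr 1 <;> refine Finset.sum_congr rfl fun j _ => Finset.sum_congr rfl fun k _ => ?_ <;> ring
  rw [hsplit, sum_sum_mul_Phi, sum_sum_mul_Phi]
  linarith [im_conj_mul_mul_im_conj_mul_le (u y) (u x) (∑ j, (e j : ℂ) * pdC u j x)
    (∑ j, (e j : ℂ) * pdC u j y)]

/-- Positive semi-definiteness of the symmetrized interaction quadratic form:
for `u ∈ C¹(ℝ⁴, ℂ)` and `Ψ_{jk}(x,y) = ½Φ_{jk}(x,y) + ½Φ_{jk}(y,x)`, one has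
`∑_{j,k} e_j e_k Ψ_{jk}(x,y) ≥ 0` for every `e ∈ ℝ⁴`. -/
theorem stmt8 (u : E4 → ℂ) (hu : ContDiff ℝ 1 u) (x y : E4) (e : Fin 4 → ℝ) :
    0 ≤ ∑ j, ∑ k, e j * e k * ((1/2) * Phi u j k x y + (1/2) * Phi u j k y x) :=
  stmt8_general u x y e

end
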